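/- arXiv:0801.2582 — 2 statements merged into one kernel-verified Lean document; each statement's English description precedes it below -/
import Mathlib

section
/- Let K be a simplicial complex with vertex set {1,…,n} and let f : {1,…,n} → ℝ³ be a map such that every four of the points f(1),…,f(n) are affinely independent, and such that for every triangle F ∈ K and every edge G ∈ K with F ∩ G = ∅ the convex hulls of f(F) and f(G) are disjoint. Define χ(a,b,c,d) to be the sign of the determinant of the 3×3 matrix with columns f(b)−f(a), f(c)−f(a), f(d)−f(a), for pairwise distinct a,b,c,d ∈ {1,…,n}. Then χ is a uniform rank-4 chirotope on {1,…,n} that is acyclic and admissible for K. -/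
open Finset

/-- The sign `sᵢ = (-1)^i · χ(c₁,…,ĉᵢ,…,c₅)` of the `i`-th element of a circuit
supported on the 5-set enumerated in increasing order by `c`. -/
def circSign (χ : ℕ → ℕ → ℕ → ℕ → ℤ) (c : Fin 5 → ℕ) (i : Fin 5) : ℤ :=
  (-1 : ℤ) ^ ((i : ℕ) + 1) *
    χ (c (i.succAbove 0)) (c (i.succAbove 1)) (c (i.succAbove 2)) (c (i.succAbove 3))

/-- A uniform rank-4 chirotope on the ground set `E`: values ±1 on tuples of pairwise
distinct elements, alternating (interchanging two arguments negates the value), and the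
three-term Grassmann–Plücker relations. -/
def IsChirotope (E : Finset ℕ) (χ : ℕ → ℕ → ℕ → ℕ → ℤ) : Prop :=
  (∀ a ∈ E, ∀ b ∈ E, ∀ c ∈ E, ∀ d ∈ E,
      a ≠ b → a ≠ c → a ≠ d → b ≠ c → b ≠ d → c ≠ d →
      χ a b c d = 1 ∨ χ a b c d = -1) ∧
  (∀ a ∈ E, ∀ b ∈ E, ∀ c ∈ E, ∀ d ∈ E, χ b a c d = -χ a b c d) ∧
  (∀ a ∈ E, ∀ b ∈ E, ∀ c ∈ E, ∀ d ∈ E, χ a c b d = -χ a b c d) ∧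
  (∀ a ∈ E, ∀ b ∈ E, ∀ c ∈ E, ∀ d ∈ E, χ a b d c = -χ a b c d) ∧
  (∀ y₁ ∈ E, ∀ y₂ ∈ E, ∀ x₁ ∈ E, ∀ x₂ ∈ E, ∀ x₃ ∈ E, ∀ x₄ ∈ E,
      y₁ ≠ y₂ →
      x₁ ≠ x₂ → x₁ ≠ x₃ → x₁ ≠ x₄ → x₂ ≠ x₃ → x₂ ≠ x₄ → x₃ ≠ x₄ →
      x₁ ≠ y₁ → x₁ ≠ y₂ → x₂ ≠ y₁ → x₂ ≠ y₂ → x₃ ≠ y₁ → x₃ ≠ y₂ →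
      x₄ ≠ y₁ → x₄ ≠ y₂ →
      ({1, -1} : Set ℤ) ⊆
        ({χ y₁ y₂ x₁ x₂ * χ y₁ y₂ x₃ x₄, -(χ y₁ y₂ x₁ x₃ * χ y₁ y₂ x₂ x₄),
          χ y₁ y₂ x₁ x₄ * χ y₁ y₂ x₂ x₃} : Set ℤ))

/-- Acyclic: for every 5-element subset of `E` the circuit signs are not all equal. -/
def IsAcyclic (E : Finset ℕ) (χ : ℕ → ℕ → ℕ → ℕ → ℤ) : Prop :=
  ∀ c : Fin 5 → ℕ, StrictMono c → (∀ i, c i ∈ E) →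
    ¬ (∀ i j : Fin 5, circSign χ c i = circSign χ c j)

/-- Admissible for a simplicial complex `K` (given as the set of all its faces): for
every triangle `F ∈ K` and every edge `G ∈ K` with `F ∩ G = ∅`, no circuit on `F ∪ G`
is positive exactly on `F` and negative exactly on `G` (or vice versa). -/
def IsAdmissibleSC (K : Finset (Finset ℕ)) (χ : ℕ → ℕ → ℕ → ℕ → ℤ) : Prop :=
  ∀ F ∈ K, F.card = 3 → ∀ G ∈ K, G.card = 2 → F ∩ G = ∅ →
    ∀ c : Fin 5 → ℕ, StrictMono c → Finset.image c Finset.univ = F ∪ G →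
      ¬ ∃ ε : ℤ, (ε = 1 ∨ ε = -1) ∧
          (∀ i : Fin 5, c i ∈ F → circSign χ c i = ε) ∧
          (∀ i : Fin 5, c i ∈ G → circSign χ c i = -ε)

/-- The sign of the determinant of the 3×3 matrix with columns
`f b - f a`, `f c - f a`, `f d - f a`. -/
noncomputable def detChi (f : ℕ → EuclideanSpace ℝ (Fin 3)) (a b c d : ℕ) : ℤ :=
  (SignType.sign (Matrix.det (Matrix.of fun i j : Fin 3 =>
    (![f b - f a, f c - f a, f d - f a] j) i)) : ℤ)

/-!
Write `D(a,b,c,d) = det (f b - f a, f c - f a, f d - f a)`, so that `χ = sign D`. As polynomial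
identities in the coordinates, `D` is alternating and satisfies the three-term Grassmann–Plücker
relation, and general position makes every `D` nonzero; hence `χ` is a uniform chirotope.
For five points `c₀, …, c₄` the signed cofactors `wᵢ = (-1)^i D(c₀, …, ĉᵢ, …, c₄)` form an affine
dependence, `∑ wᵢ = 0` and `∑ wᵢ f(cᵢ) = 0` (Laplace expansion of a determinant with a repeated
row), and the circuit signs are `sᵢ = -sign wᵢ`. Constant signs would contradict `∑ wᵢ = 0`, which
gives acyclicity; a circuit with one sign on a triangle `F` and the other on a disjoint edge `G`
would make `∑_{i ∈ F} wᵢ f(cᵢ) / ∑_{i ∈ F} wᵢ` a common point of the two convex hulls.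
-/

section LinearRelations

variable {ι 𝕜 : Type*} [Field 𝕜] [LinearOrder 𝕜] [IsStrictOrderedRing 𝕜]

theorem convexHull_inter_convexHull_compl_nonempty {E : Type*} [AddCommGroup E] [Module 𝕜 E]
    [Fintype ι] [DecidableEq ι] {w : ι → 𝕜} {p : ι → E}
    (hw : ∑ i, w i = 0) (hwp : ∑ i, w i • p i = 0) {s : Finset ι} (hs : s.Nonempty)
    (hpos : ∀ i ∈ s, 0 < w i) (hnonpos : ∀ i ∉ s, w i ≤ 0) :
    (convexHull 𝕜 (p '' s) ∩ convexHull 𝕜 (p '' (sᶜ : Finset ι))).Nonempty := by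
  have hs_pos : 0 < ∑ i ∈ s, w i := sum_pos hpos hs
  have hsplit : ∑ i ∈ s, w i + ∑ i ∈ sᶜ, w i = 0 := by rwa [sum_add_sum_compl]
  refine ⟨s.centerMass w p, centerMass_mem_convexHull _ (fun i hi ↦ (hpos i hi).le) hs_pos
    (fun i hi ↦ Set.mem_image_of_mem _ hi), ?_⟩
  rw [centerMass_of_sum_add_sum_eq_zero hsplit (by rwa [sum_add_sum_compl])]
  exact centerMass_mem_convexHull_of_nonpos _ (fun i hi ↦ hnonpos i (mem_compl.1 hi))
    (by linarith) (fun i hi ↦ Set.mem_image_of_mem _ hi)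

theorem sum_ne_zero_of_sign_eq [Fintype ι] {w : ι → 𝕜} (i₀ : ι) (h₀ : w i₀ ≠ 0)
    (h : ∀ i, SignType.sign (w i) = SignType.sign (w i₀)) : ∑ i, w i ≠ 0 := by
  rcases h₀.lt_or_gt with hneg | hpos
  · have hall : ∀ i, w i < 0 := fun i ↦ sign_eq_neg_one_iff.1 ((h i).trans (sign_neg hneg))
    exact (sum_neg (fun i _ ↦ hall i) ⟨i₀, mem_univ _⟩).ne
  · have hall : ∀ i, 0 < w i := fun i ↦ sign_eq_one_iff.1 ((h i).trans (sign_pos hpos))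
    exact (sum_pos (fun i _ ↦ hall i) ⟨i₀, mem_univ _⟩).ne'

theorem one_neg_one_subset_signs_of_add_add_eq_zero {x y z : 𝕜} (hx : x ≠ 0) (hy : y ≠ 0)
    (hz : z ≠ 0) (h : x + y + z = 0) :
    ({1, -1} : Set ℤ) ⊆ {(SignType.sign x : ℤ), (SignType.sign y : ℤ), (SignType.sign z : ℤ)} := by
  rcases hx.lt_or_gt with hx | hx <;> rcases hy.lt_or_gt with hy | hy <;>
    rcases hz.lt_or_gt with hz | hz <;>
    first
    | (exfalso; linarith)
    | simp [Set.insert_subset_iff, sign_pos, sign_neg, *]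

theorem SignType.intCast_injective : Function.Injective (fun s : SignType ↦ (s : ℤ)) := by
  decide

theorem mul_pos_of_sign_eq {ε : ℤ} (hε : ε = 1 ∨ ε = -1) {x : 𝕜}
    (h : (SignType.sign x : ℤ) = ε) : 0 < ε * x := by
  rcases hε with rfl | rfl
  · simpa using sign_eq_one_iff.1 (SignType.intCast_injective h)
  · simpa using sign_eq_neg_one_iff.1 (SignType.intCast_injective h)

end LinearRelations

noncomputable def orientDet (p q r s : EuclideanSpace ℝ (Fin 3)) : ℝ :=
  (Matrix.of fun i j : Fin 3 ↦ (![q - p, r - p, s - p] j) i).det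

theorem detChi_eq_sign_orientDet (f : ℕ → EuclideanSpace ℝ (Fin 3)) (a b c d : ℕ) :
    detChi f a b c d = SignType.sign (orientDet (f a) (f b) (f c) (f d)) :=
  rfl

namespace orientDet

variable (p q r s : EuclideanSpace ℝ (Fin 3))

theorem eq_coords : orientDet p q r s =
    (q 0 - p 0) * ((r 1 - p 1) * (s 2 - p 2) - (r 2 - p 2) * (s 1 - p 1))
      - (r 0 - p 0) * ((q 1 - p 1) * (s 2 - p 2) - (q 2 - p 2) * (s 1 - p 1))
      + (s 0 - p 0) * ((q 1 - p 1) * (r 2 - p 2) - (q 2 - p 2) * (r 1 - p 1)) := by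
  simp only [orientDet, Matrix.det_fin_three, Matrix.of_apply, Matrix.cons_val_zero,
    Matrix.cons_val_one, Matrix.cons_val_two, Matrix.head_cons, Matrix.tail_cons, PiLp.sub_apply]
  ring

theorem swap_01 : orientDet q p r s = -orientDet p q r s := by
  simp only [eq_coords]; ring

theorem swap_12 : orientDet p r q s = -orientDet p q r s := by
  simp only [eq_coords]; ring

theorem swap_23 : orientDet p q s r = -orientDet p q r s := by
  simp only [eq_coords]; ring

theorem grassmann_plucker (y₁ y₂ x₁ x₂ x₃ x₄ : EuclideanSpace ℝ (Fin 3)) :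
    orientDet y₁ y₂ x₁ x₂ * orientDet y₁ y₂ x₃ x₄
      + -(orientDet y₁ y₂ x₁ x₃ * orientDet y₁ y₂ x₂ x₄)
      + orientDet y₁ y₂ x₁ x₄ * orientDet y₁ y₂ x₂ x₃ = 0 := by
  simp only [eq_coords]; ring

theorem ne_zero {p q r s : EuclideanSpace ℝ (Fin 3)} (h : AffineIndependent ℝ ![p, q, r, s]) :
    orientDet p q r s ≠ 0 := by
  have hvsub := (affineIndependent_iff_linearIndependent_vsub ℝ _ 0).1 h
  have hcols : LinearIndependent ℝ ![q - p, r - p, s - p] := by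
    have hsucc : ![q - p, r - p, s - p] = (fun i : {i : Fin 4 // i ≠ 0} ↦
        ![p, q, r, s] i -ᵥ ![p, q, r, s] 0) ∘ fun j : Fin 3 ↦ ⟨j.succ, j.succ_ne_zero⟩ := by
      funext j
      fin_cases j <;> rfl
    rw [hsucc]
    exact hvsub.comp _ fun j k h ↦ Fin.succ_injective _ (congrArg Subtype.val h)
  have hcols' := hcols.map' (WithLp.linearEquiv 2 ℝ (Fin 3 → ℝ)).toLinearMap
    (LinearEquiv.ker _)
  exact (Matrix.isUnit_iff_isUnit_det _).1 (Matrix.linearIndependent_cols_iff_isUnit.1 hcols')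
    |>.ne_zero

end orientDet

noncomputable def circuitWeight (p : Fin 5 → EuclideanSpace ℝ (Fin 3)) (i : Fin 5) : ℝ :=
  (-1) ^ (i : ℕ) *
    orientDet (p (i.succAbove 0)) (p (i.succAbove 1)) (p (i.succAbove 2)) (p (i.succAbove 3))

namespace circuitWeight

variable (p : Fin 5 → EuclideanSpace ℝ (Fin 3))

theorem sum_mul (g : Fin 5 → ℝ) : ∑ i, circuitWeight p i * g i =
    orientDet (p 1) (p 2) (p 3) (p 4) * g 0 - orientDet (p 0) (p 2) (p 3) (p 4) * g 1
      + orientDet (p 0) (p 1) (p 3) (p 4) * g 2 - orientDet (p 0) (p 1) (p 2) (p 4) * g 3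
      + orientDet (p 0) (p 1) (p 2) (p 3) * g 4 := by
  simp [circuitWeight, Fin.sum_univ_five, Fin.succAbove, sub_eq_add_neg, pow_succ]

theorem sum_eq_zero : ∑ i, circuitWeight p i = 0 := by
  rw [← Finset.sum_congr rfl fun i _ ↦ mul_one (circuitWeight p i)]
  simp only [sum_mul, orientDet.eq_coords]
  ring

theorem sum_smul_eq_zero : ∑ i, circuitWeight p i • p i = 0 := by
  ext k
  simp only [WithLp.ofLp_sum, WithLp.ofLp_smul, Finset.sum_apply, Pi.smul_apply, smul_eq_mul,
    sum_mul, orientDet.eq_coords, PiLp.zero_apply]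
  fin_cases k <;> dsimp <;> ring

end circuitWeight

theorem circSign_detChi (f : ℕ → EuclideanSpace ℝ (Fin 3)) (c : Fin 5 → ℕ) (i : Fin 5) :
    circSign (detChi f) c i = -SignType.sign (circuitWeight (f ∘ c) i) := by
  simp [circSign, circuitWeight, detChi_eq_sign_orientDet, sign_mul, sign_pow, pow_succ]

def InGeneralPosition (E : Finset ℕ) (f : ℕ → EuclideanSpace ℝ (Fin 3)) : Prop :=
  ∀ a ∈ E, ∀ b ∈ E, ∀ c ∈ E, ∀ d ∈ E, a ≠ b → a ≠ c → a ≠ d → b ≠ c → b ≠ d → c ≠ d →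
    AffineIndependent ℝ ![f a, f b, f c, f d]

section DetChi

variable {f : ℕ → EuclideanSpace ℝ (Fin 3)}

theorem detChi_isChirotope {E : Finset ℕ} (hf : InGeneralPosition E f) :
    IsChirotope E (detChi f) := by
  have hne : ∀ {a b c d}, a ∈ E → b ∈ E → c ∈ E → d ∈ E →
      a ≠ b → a ≠ c → a ≠ d → b ≠ c → b ≠ d → c ≠ d → orientDet (f a) (f b) (f c) (f d) ≠ 0 :=
    fun ha hb hc hd h₁ h₂ h₃ h₄ h₅ h₆ ↦ orientDet.ne_zero (hf _ ha _ hb _ hc _ hd h₁ h₂ h₃ h₄ h₅ h₆)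
  refine ⟨?_, ?_, ?_, ?_, ?_⟩
  · intro a ha b hb c hc d hd h₁ h₂ h₃ h₄ h₅ h₆
    rcases (hne ha hb hc hd h₁ h₂ h₃ h₄ h₅ h₆).lt_or_gt with h | h <;>
      simp [detChi_eq_sign_orientDet, sign_neg, sign_pos, h]
  · intro a _ b _ c _ d _
    rw [detChi_eq_sign_orientDet, detChi_eq_sign_orientDet, orientDet.swap_01, Left.sign_neg,
      SignType.coe_neg]
  · intro a _ b _ c _ d _
    rw [detChi_eq_sign_orientDet, detChi_eq_sign_orientDet, orientDet.swap_12, Left.sign_neg,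
      SignType.coe_neg]
  · intro a _ b _ c _ d _
    rw [detChi_eq_sign_orientDet, detChi_eq_sign_orientDet, orientDet.swap_23, Left.sign_neg,
      SignType.coe_neg]
  · intro y₁ hy₁ y₂ hy₂ x₁ hx₁ x₂ hx₂ x₃ hx₃ x₄ hx₄ hy h₁₂ h₁₃ h₁₄ h₂₃ h₂₄ h₃₄
      h₁y₁ h₁y₂ h₂y₁ h₂y₂ h₃y₁ h₃y₂ h₄y₁ h₄y₂
    have hne' : ∀ {x x'}, x ∈ E → x' ∈ E → x ≠ y₁ → x ≠ y₂ → x' ≠ y₁ → x' ≠ y₂ → x ≠ x' →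
        orientDet (f y₁) (f y₂) (f x) (f x') ≠ 0 :=
      fun hx hx' hxy₁ hxy₂ hx'y₁ hx'y₂ hxx' ↦
        hne hy₁ hy₂ hx hx' hy hxy₁.symm hx'y₁.symm hxy₂.symm hx'y₂.symm hxx'
    simp only [detChi_eq_sign_orientDet, ← SignType.coe_mul, ← sign_mul, ← SignType.coe_neg,
      ← Left.sign_neg]
    exact one_neg_one_subset_signs_of_add_add_eq_zero
      (mul_ne_zero (hne' hx₁ hx₂ h₁y₁ h₁y₂ h₂y₁ h₂y₂ h₁₂) (hne' hx₃ hx₄ h₃y₁ h₃y₂ h₄y₁ h₄y₂ h₃₄))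
      (neg_ne_zero.2 <| mul_ne_zero (hne' hx₁ hx₃ h₁y₁ h₁y₂ h₃y₁ h₃y₂ h₁₃)
        (hne' hx₂ hx₄ h₂y₁ h₂y₂ h₄y₁ h₄y₂ h₂₄))
      (mul_ne_zero (hne' hx₁ hx₄ h₁y₁ h₁y₂ h₄y₁ h₄y₂ h₁₄) (hne' hx₂ hx₃ h₂y₁ h₂y₂ h₃y₁ h₃y₂ h₂₃))
      (orientDet.grassmann_plucker _ _ _ _ _ _)

theorem detChi_isAcyclic {E : Finset ℕ} (hf : InGeneralPosition E f) :
    IsAcyclic E (detChi f) := by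
  intro c hc hcE hall
  have h₀ : circuitWeight (f ∘ c) 0 ≠ 0 := by
    simpa [circuitWeight] using orientDet.ne_zero <| hf _ (hcE 1) _ (hcE 2) _ (hcE 3) _ (hcE 4)
      (hc.injective.ne (by decide)) (hc.injective.ne (by decide)) (hc.injective.ne (by decide))
      (hc.injective.ne (by decide)) (hc.injective.ne (by decide)) (hc.injective.ne (by decide))
  refine sum_ne_zero_of_sign_eq 0 h₀ (fun i ↦ SignType.intCast_injective ?_)
    (circuitWeight.sum_eq_zero _)
  simpa [circSign_detChi] using hall i 0

theorem detChi_isAdmissibleSC {K : Finset (Finset ℕ)}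
    (hdisj : ∀ F ∈ K, F.card = 3 → ∀ G ∈ K, G.card = 2 → F ∩ G = ∅ →
      convexHull ℝ (f '' (F : Set ℕ)) ∩ convexHull ℝ (f '' (G : Set ℕ)) = ∅) :
    IsAdmissibleSC K (detChi f) := by
  classical
  intro F hF hF3 G hG hG2 hFG c _ himg ⟨ε, hε, hεF, hεG⟩
  set s := univ.filter fun i ↦ c i ∈ F
  have hG_of_notMem : ∀ i ∉ s, c i ∈ G := fun i hi ↦
    (mem_union.1 (himg ▸ mem_image_of_mem c (mem_univ i))).resolve_left (by simpa [s] using hi)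
  have hs : s.Nonempty := by
    obtain ⟨x, hx⟩ := card_pos.1 (hF3 ▸ three_pos : 0 < F.card)
    obtain ⟨i, -, rfl⟩ := mem_image.1 (himg ▸ mem_union_left G hx)
    exact ⟨i, mem_filter.2 ⟨mem_univ _, hx⟩⟩
  have hε' : -ε = 1 ∨ -ε = -1 := by omega
  -- the circuit signs are `-sign w`, so `-ε * w` is positive on `F` and negative on `G`
  obtain ⟨x, hxF, hxG⟩ := convexHull_inter_convexHull_compl_nonempty
    (w := fun i ↦ ((-ε : ℤ) : ℝ) * circuitWeight (f ∘ c) i) (p := f ∘ c)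
    (by rw [← mul_sum, circuitWeight.sum_eq_zero, mul_zero])
    (by simp_rw [mul_smul]; rw [← smul_sum, circuitWeight.sum_smul_eq_zero, smul_zero]) hs
    (fun i hi ↦ mul_pos_of_sign_eq hε' <| by
      rw [← hεF i (mem_filter.1 hi).2, circSign_detChi, neg_neg])
    (fun i hi ↦ by
      have := mul_pos_of_sign_eq hε <| by
        rw [← neg_neg ε, ← hεG i (hG_of_notMem i hi), circSign_detChi, neg_neg]
      push_cast
      linarith)
  have hsubF : (f ∘ c) '' s ⊆ f '' F := by
    rintro _ ⟨i, hi, rfl⟩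
    exact ⟨c i, (mem_filter.1 hi).2, rfl⟩
  have hsubG : (f ∘ c) '' (sᶜ : Finset (Fin 5)) ⊆ f '' G := by
    rintro _ ⟨i, hi, rfl⟩
    exact ⟨c i, hG_of_notMem i (by simpa using hi), rfl⟩
  exact Set.eq_empty_iff_forall_notMem.1 (hdisj F hF hF3 G hG hG2 hFG) x
    ⟨convexHull_mono hsubF hxF, convexHull_mono hsubG hxG⟩

end DetChi

theorem detChi_isChirotope_acyclic_admissible_general (n : ℕ) (K : Finset (Finset ℕ))
    (f : ℕ → EuclideanSpace ℝ (Fin 3))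
    (hgen : ∀ a ∈ Finset.Icc 1 n, ∀ b ∈ Finset.Icc 1 n, ∀ c ∈ Finset.Icc 1 n,
      ∀ d ∈ Finset.Icc 1 n, a ≠ b → a ≠ c → a ≠ d → b ≠ c → b ≠ d → c ≠ d →
      AffineIndependent ℝ ![f a, f b, f c, f d])
    (hdisj : ∀ F ∈ K, F.card = 3 → ∀ G ∈ K, G.card = 2 → F ∩ G = ∅ →
      convexHull ℝ (f '' (F : Set ℕ)) ∩ convexHull ℝ (f '' (G : Set ℕ)) = ∅) :
    IsChirotope (Finset.Icc 1 n) (detChi f) ∧ IsAcyclic (Finset.Icc 1 n) (detChi f) ∧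
      IsAdmissibleSC K (detChi f) :=
  ⟨detChi_isChirotope hgen, detChi_isAcyclic hgen, detChi_isAdmissibleSC hdisj⟩

/-- If `K` is a simplicial complex on `{1,…,n}` and `f : {1,…,n} → ℝ³` is such that every
four of the points are affinely independent and the convex hulls of the images of any
disjoint triangle/edge pair of `K` are disjoint, then the determinant-sign map is an
acyclic uniform rank-4 chirotope admissible for `K`. -/
theorem detChi_isChirotope_acyclic_admissible (n : ℕ) (K : Finset (Finset ℕ))
    (hKfaces : ∀ σ ∈ K, σ.Nonempty ∧ σ ⊆ Finset.Icc 1 n)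
    (hKdown : ∀ σ ∈ K, ∀ τ : Finset ℕ, τ ⊆ σ → τ.Nonempty → τ ∈ K)
    (f : ℕ → EuclideanSpace ℝ (Fin 3))
    (hgen : ∀ a ∈ Finset.Icc 1 n, ∀ b ∈ Finset.Icc 1 n, ∀ c ∈ Finset.Icc 1 n,
      ∀ d ∈ Finset.Icc 1 n, a ≠ b → a ≠ c → a ≠ d → b ≠ c → b ≠ d → c ≠ d →
      AffineIndependent ℝ ![f a, f b, f c, f d])
    (hdisj : ∀ F ∈ K, F.card = 3 → ∀ G ∈ K, G.card = 2 → F ∩ G = ∅ →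
      convexHull ℝ (f '' (F : Set ℕ)) ∩ convexHull ℝ (f '' (G : Set ℕ)) = ∅) :
    IsChirotope (Finset.Icc 1 n) (detChi f) ∧ IsAcyclic (Finset.Icc 1 n) (detChi f) ∧
      IsAdmissibleSC K (detChi f) :=
  detChi_isChirotope_acyclic_admissible_general n K f hgen hdisj
end

section
/- Let 𝒮 and 𝒯 be combinatorial closed orientable surfaces of genera g_𝒮 and g_𝒯 on disjoint vertex sets V_𝒮 and V_𝒯, let T₁ ∈ 𝒮 and T₂ ∈ 𝒯 be triangles, and let 𝒳 be the connected sum obtained from (𝒮 ∖ {T₁}) ∪ (𝒯 ∖ {T₂}) by identifying the three vertices of T₂ with the three vertices of T₁ via a fixed bijection. Then 𝒳 is a combinatorial closed orientable surface of genus g_𝒮 + g_𝒯 with |V_𝒮| + |V_𝒯| − 3 vertices, and if 𝒮 ∖ {T₁} admits no embedding into ℝ³, then 𝒳 admits no embedding into ℝ³. -/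
open Finset

/-- The vertices of a set of triangles. -/
def vertsOf (K : Finset (Finset ℕ)) : Finset ℕ := K.biUnion id

/-- The edges of a set of triangles: all 2-element subsets of its members. -/
def edgesOf (K : Finset (Finset ℕ)) : Finset (Finset ℕ) :=
  K.biUnion fun T => T.powersetCard 2

/-- The three directed edges induced by the cyclic ordering `(t.1, t.2.1, t.2.2)`. -/
def dedges (t : ℕ × ℕ × ℕ) : Finset (ℕ × ℕ) :=
  {(t.1, t.2.1), (t.2.1, t.2.2), (t.2.2, t.1)}

/-- A combinatorial closed orientable surface of genus `g` on the vertex set `V`: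
a nonempty set of triangles on `V` covering `V`, each edge lies in exactly two
triangles, the triangles around each vertex form a single cycle under sharing an
edge through that vertex (formalized as connectivity of that adjacency relation),
the complex is connected, it carries a coherent orientation (a cyclic ordering of
each triangle inducing opposite orderings on each shared edge), and
`|V| - |E| + |F| = 2 - 2g`. -/
def IsCombSurface (V : Finset ℕ) (K : Finset (Finset ℕ)) (g : ℕ) : Prop :=
  K.Nonempty ∧
  (∀ T ∈ K, T.card = 3 ∧ T ⊆ V) ∧
  (∀ v ∈ V, ∃ T ∈ K, v ∈ T) ∧
  (∀ e : Finset ℕ, e.card = 2 → (∃ T ∈ K, e ⊆ T) →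
      (K.filter fun T => e ⊆ T).card = 2) ∧
  (∀ v ∈ V, ∀ T₁ ∈ K, ∀ T₂ ∈ K, v ∈ T₁ → v ∈ T₂ →
      Relation.ReflTransGen
        (fun A B => A ∈ K ∧ B ∈ K ∧ v ∈ A ∧ v ∈ B ∧ (A ∩ B).card = 2) T₁ T₂) ∧
  (∀ T₁ ∈ K, ∀ T₂ ∈ K,
      Relation.ReflTransGen (fun A B => A ∈ K ∧ B ∈ K ∧ (A ∩ B).card = 2) T₁ T₂) ∧
  (∃ ω : Finset ℕ → ℕ × ℕ × ℕ,
      (∀ T ∈ K, ({(ω T).1, (ω T).2.1, (ω T).2.2} : Finset ℕ) = T) ∧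
      (∀ T₁ ∈ K, ∀ T₂ ∈ K, T₁ ≠ T₂ → ∀ a b : ℕ, a ≠ b →
          a ∈ T₁ ∩ T₂ → b ∈ T₁ ∩ T₂ →
          (a, b) ∈ dedges (ω T₁) → (b, a) ∈ dedges (ω T₂))) ∧
  ((V.card : ℤ) - ((edgesOf K).card : ℤ) + (K.card : ℤ) = 2 - 2 * (g : ℤ))

/-- A face of a set of triangles: a nonempty subset of one of its triangles. -/
def IsFaceOf (K : Finset (Finset ℕ)) (σ : Finset ℕ) : Prop :=
  σ.Nonempty ∧ ∃ T ∈ K, σ ⊆ T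

/-- `K` admits an embedding into ℝ³: a map on the vertices with every four image
points affinely independent such that disjoint faces have disjoint convex hulls. -/
def AdmitsEmbedding (K : Finset (Finset ℕ)) : Prop :=
  ∃ f : ℕ → EuclideanSpace ℝ (Fin 3),
    (∀ a ∈ vertsOf K, ∀ b ∈ vertsOf K, ∀ c ∈ vertsOf K, ∀ d ∈ vertsOf K,
      a ≠ b → a ≠ c → a ≠ d → b ≠ c → b ≠ d → c ≠ d →
      AffineIndependent ℝ ![f a, f b, f c, f d]) ∧
    (∀ σ τ : Finset ℕ, IsFaceOf K σ → IsFaceOf K τ → σ ∩ τ = ∅ →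
      convexHull ℝ (f '' (σ : Set ℕ)) ∩ convexHull ℝ (f '' (τ : Set ℕ)) = ∅)

/-!
Since `φ` is injective on `VT`, relabelling `T` by `φ` gives a surface on `T₁ ∪ (VT \ T₂)` whose
vertex set meets `VS` exactly in the triangle `T₁`, and the connected sum deletes `T₁` from both.
An edge of `T₁` loses one of its two triangles on each side; other edges keep theirs. The
triangles around a vertex of `T₁` form a cycle, which stays connected when `T₁` is deleted, and
the two halves are joined through the triangles of `S` and `T` on a common edge of `T₁`. Deleting
`T₁` keeps each side connected (go around a vertex of `T₁`), and the same bridge joins the sides.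
The orientations glue once that of `T` is reversed, if necessary, to induce on `T₁` the ordering
opposite to that of `S`. Vertices, edges and triangles drop by `3`, `3` and `2`, so the Euler
characteristic of the sum is `χ(S) + χ(T) - 2`. Finally `S \ {T₁}` is a subcomplex of the sum,
so an embedding of the sum restricts to one of it.
-/

section ConnectedIn

variable {α β : Type*} {r : α → α → Prop} {K L : Finset α}

def relIn (K : Finset α) (r : α → α → Prop) (a b : α) : Prop := a ∈ K ∧ b ∈ K ∧ r a b

def IsConnectedIn (K : Finset α) (r : α → α → Prop) : Prop :=
  ∀ a ∈ K, ∀ b ∈ K, Relation.ReflTransGen (relIn K r) a b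

lemma reflTransGen_relIn_mono (h : K ⊆ L) {a b : α} :
    Relation.ReflTransGen (relIn K r) a b → Relation.ReflTransGen (relIn L r) a b :=
  Relation.ReflTransGen.mono (fun _ _ hab => ⟨h hab.1, h hab.2.1, hab.2.2⟩) _ _

lemma IsConnectedIn.union [DecidableEq α] (hK : IsConnectedIn K r) (hL : IsConnectedIn L r)
    {a b : α} (ha : a ∈ K) (hb : b ∈ L) (hab : r a b) (hba : r b a) :
    IsConnectedIn (K ∪ L) r := by
  have hKL : ∀ x ∈ K, ∀ y ∈ L, Relation.ReflTransGen (relIn (K ∪ L) r) x y :=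
    fun x hx y hy =>
      ((reflTransGen_relIn_mono subset_union_left (hK x hx a ha)).tail
        ⟨mem_union_left L ha, mem_union_right K hb, hab⟩).trans
      (reflTransGen_relIn_mono subset_union_right (hL b hb y hy))
  have hLK : ∀ y ∈ L, ∀ x ∈ K, Relation.ReflTransGen (relIn (K ∪ L) r) y x :=
    fun y hy x hx =>
      ((reflTransGen_relIn_mono subset_union_right (hL y hy b hb)).tail
        ⟨mem_union_right K hb, mem_union_left L ha, hba⟩).trans
      (reflTransGen_relIn_mono subset_union_left (hK a ha x hx))
  intro x hx y hy
  rcases mem_union.1 hx with hx | hx <;> rcases mem_union.1 hy with hy | hy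
  · exact reflTransGen_relIn_mono subset_union_left (hK x hx y hy)
  · exact hKL x hx y hy
  · exact hLK x hx y hy
  · exact reflTransGen_relIn_mono subset_union_right (hL x hx y hy)

lemma IsConnectedIn.image [DecidableEq β] {f : α → β} {r' : β → β → Prop}
    (hK : IsConnectedIn K r) (hf : ∀ a ∈ K, ∀ b ∈ K, r a b → r' (f a) (f b)) :
    IsConnectedIn (K.image f) r' := by
  simp only [IsConnectedIn, forall_mem_image]
  intro a ha b hb
  exact (hK a ha b hb).lift f fun c d ⟨hc, hd, hcd⟩ =>
    ⟨mem_image_of_mem f hc, mem_image_of_mem f hd, hf c hc d hd hcd⟩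

lemma IsConnectedIn.erase_of_forall_adj [DecidableEq α] (hK : IsConnectedIn K r) (x : α)
    (hx : ∀ p ∈ K.erase x, ∀ q ∈ K.erase x, r p x → r x q →
      Relation.ReflTransGen (relIn (K.erase x) r) p q) :
    IsConnectedIn (K.erase x) r := by
  intro a ha b hb
  suffices h : ∀ c, Relation.ReflTransGen (relIn K r) a c → ∃ p ∈ K.erase x,
      Relation.ReflTransGen (relIn (K.erase x) r) a p ∧ (p = c ∨ c = x ∧ r p x) by
    obtain ⟨p, -, hap, rfl | ⟨rfl, -⟩⟩ :=
      h b (hK a (mem_of_mem_erase ha) b (mem_of_mem_erase hb))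
    · exact hap
    · exact absurd rfl (ne_of_mem_erase hb)
  intro c hc
  induction hc with
  | refl => exact ⟨a, ha, .refl, Or.inl rfl⟩
  | @tail c d _ hcd ih =>
    obtain ⟨-, hd, hcd⟩ := hcd
    obtain ⟨p, hp, hap, hpc⟩ := ih
    by_cases hdx : d = x
    · subst hdx
      rcases hpc with rfl | ⟨rfl, hpx⟩
      · exact ⟨p, hp, hap, Or.inr ⟨rfl, hcd⟩⟩
      · exact ⟨p, hp, hap, Or.inr ⟨rfl, hpx⟩⟩
    · have hd' : d ∈ K.erase x := mem_erase.2 ⟨hdx, hd⟩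
      rcases hpc with rfl | ⟨rfl, hpx⟩
      · exact ⟨d, hd', hap.tail ⟨hp, hd', hcd⟩, Or.inl rfl⟩
      · exact ⟨d, hd', hap.trans (hx p hp d hd' hpx hcd), Or.inl rfl⟩

lemma even_sum_card_filter [DecidableRel r] (s : Finset α) (hsymm : ∀ a b, r a b → r b a)
    (hirr : ∀ a ∈ s, ¬ r a a) : Even (∑ a ∈ s, #(s.filter (r a))) := by
  rw [← ZMod.natCast_eq_zero_iff_even]
  push_cast
  simp_rw [natCast_card_filter,
    ← sum_product' (f := fun a b => if r a b then (1 : ZMod 2) else 0)]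
  refine sum_involution (fun p _ => p.swap) (fun p _ => ?_) (fun p hp h => ?_)
    (fun p hp => mem_product.2 ⟨(mem_product.1 hp).2, (mem_product.1 hp).1⟩) (fun _ _ => rfl)
  · by_cases h : r p.1 p.2
    · simp only [Prod.fst_swap, Prod.snd_swap, h, hsymm _ _ h, if_true]
      decide
    · simpa [h] using fun h' => h (hsymm _ _ h')
  · intro hp'
    have hr : r p.1 p.2 := by
      by_contra hr
      exact h (if_neg hr)
    have h21 : p.2 = p.1 := congrArg Prod.fst hp'
    exact hirr p.1 (mem_product.1 hp).1 (by rwa [h21] at hr)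

lemma even_card_filter_of_two_regular [DecidableEq α] [DecidableRel r] {C : Finset α} {x : α}
    (hsymm : ∀ a b, r a b → r b a) (hirr : ∀ a ∈ C, ¬ r a a) (hxC : x ∉ C)
    (hdeg : ∀ c ∈ C, #((insert x C).filter (r c)) = 2) : Even #(C.filter (r · x)) := by
  have hsum : ∑ c ∈ C, #((insert x C).filter (r c)) =
      ∑ c ∈ C, #(C.filter (r c)) + #(C.filter (r · x)) := by
    rw [card_filter, ← sum_add_distrib]
    refine sum_congr rfl fun c _ => ?_
    rw [filter_insert]
    split_ifs <;> simp [hxC]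
  rw [sum_congr rfl hdeg, sum_const, smul_eq_mul] at hsum
  have htwice : Even (∑ c ∈ C, #(C.filter (r c)) + #(C.filter (r · x))) :=
    hsum ▸ even_two.mul_left _
  exact (Nat.even_add.1 htwice).1 (even_sum_card_filter C hsymm hirr)

lemma IsConnectedIn.erase_of_two_regular [DecidableEq α] [DecidableRel r]
    (hK : IsConnectedIn K r) (hsymm : ∀ a b, r a b → r b a) (hirr : ∀ a ∈ K, ¬ r a a)
    (hdeg : ∀ a ∈ K, #(K.filter (r a)) = 2) (x : α) : IsConnectedIn (K.erase x) r := by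
  by_cases hxK : x ∈ K
  swap
  · rwa [erase_eq_of_notMem hxK]
  refine hK.erase_of_forall_adj x fun p hp q hq hpx hxq => ?_
  -- `C` is the component of `p` in `K.erase x`. By the handshake lemma an even number of
  -- neighbours of `x` lie in `C`; as `p` is one of them, so is the other one, `q`.
  classical
  set C := (K.erase x).filter (Relation.ReflTransGen (relIn (K.erase x) r) p)
  have hCK : C ⊆ K := fun c hc => mem_of_mem_erase (mem_of_mem_filter c hc)
  have hxC : x ∉ C := fun h => (ne_of_mem_erase (mem_of_mem_filter x h)) rfl
  have hpC : p ∈ C := mem_filter.2 ⟨hp, .refl⟩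
  have hnbr : ∀ c ∈ C, K.filter (r c) = (insert x C).filter (r c) := by
    intro c hc
    ext d
    simp only [mem_filter, mem_insert]
    refine ⟨fun ⟨hd, hcd⟩ => ⟨?_, hcd⟩, fun ⟨hd, hcd⟩ => ⟨hd.elim (· ▸ hxK) (hCK ·), hcd⟩⟩
    by_cases hdx : d = x
    · exact Or.inl hdx
    · obtain ⟨hc, hpc⟩ := mem_filter.1 hc
      have hd' : d ∈ K.erase x := mem_erase.2 ⟨hdx, hd⟩
      exact Or.inr (mem_filter.2 ⟨hd', hpc.tail ⟨hc, hd', hcd⟩⟩)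
  have heven : Even #(C.filter (r · x)) :=
    even_card_filter_of_two_regular hsymm (fun a ha => hirr a (hCK ha)) hxC
      fun c hc => hnbr c hc ▸ hdeg c (hCK hc)
  have hsub : C.filter (r · x) ⊆ K.filter (r x) := fun c hc =>
    mem_filter.2 ⟨hCK (mem_of_mem_filter c hc), hsymm _ _ (mem_filter.1 hc).2⟩
  have hcard : #(K.filter (r x)) ≤ #(C.filter (r · x)) := by
    have hpos : 0 < #(C.filter (r · x)) := card_pos.2 ⟨p, mem_filter.2 ⟨hpC, hpx⟩⟩
    obtain ⟨k, hk⟩ := heven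
    rw [hdeg x hxK]
    omega
  have hqC := eq_of_subset_of_card_le hsub hcard ▸ mem_filter.2 ⟨mem_of_mem_erase hq, hxq⟩
  exact (mem_filter.1 (mem_of_mem_filter q hqC)).2

end ConnectedIn

abbrev Adjacent (A B : Finset ℕ) : Prop := (A ∩ B).card = 2

lemma Adjacent.symm {A B : Finset ℕ} (h : Adjacent A B) : Adjacent B A := by
  rwa [Adjacent, inter_comm]

lemma card_inter_lt_three {A B : Finset ℕ} (hA : A.card = 3) (hB : B.card = 3) (hAB : A ≠ B) :
    (A ∩ B).card < 3 :=
  hA ▸ card_lt_card (ssubset_of_subset_of_ne inter_subset_left fun h =>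
    hAB (eq_of_subset_of_card_le (h ▸ inter_subset_right) (hA ▸ hB.le)))

lemma adjacent_of_subset {A B e : Finset ℕ} (hA : A.card = 3) (hB : B.card = 3) (hAB : A ≠ B)
    (he : e.card = 2) (heA : e ⊆ A) (heB : e ⊆ B) : Adjacent A B := by
  have := he ▸ card_le_card (subset_inter heA heB)
  have := card_inter_lt_three hA hB hAB
  omega

lemma reflTransGen_link_of_isConnectedIn {K : Finset (Finset ℕ)} {v : ℕ}
    (h : IsConnectedIn (K.filter (v ∈ ·)) Adjacent) {A B : Finset ℕ} (hA : A ∈ K) (hB : B ∈ K)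
    (hvA : v ∈ A) (hvB : v ∈ B) :
    Relation.ReflTransGen
      (fun A B => A ∈ K ∧ B ∈ K ∧ v ∈ A ∧ v ∈ B ∧ (A ∩ B).card = 2) A B := by
  refine Relation.ReflTransGen.mono (fun C D hCD => ?_) _ _
    (h A (mem_filter.2 ⟨hA, hvA⟩) B (mem_filter.2 ⟨hB, hvB⟩))
  obtain ⟨hC, hD, hCD⟩ := hCD
  exact ⟨(mem_filter.1 hC).1, (mem_filter.1 hD).1, (mem_filter.1 hC).2, (mem_filter.1 hD).2, hCD⟩

lemma ne_of_card_eq_three {a b c : ℕ} (h : ({a, b, c} : Finset ℕ).card = 3) :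
    a ≠ b ∧ a ≠ c ∧ b ≠ c := by
  refine ⟨?_, ?_, ?_⟩ <;> rintro rfl <;>
    exact absurd h (by simpa using card_le_two.trans_lt (by norm_num : 2 < 3) |>.ne)

def tripleVerts (t : ℕ × ℕ × ℕ) : Finset ℕ := {t.1, t.2.1, t.2.2}

def revTriple (t : ℕ × ℕ × ℕ) : ℕ × ℕ × ℕ := (t.2.2, t.2.1, t.1)

lemma dedges_eq_or_eq_revTriple {u w : ℕ × ℕ × ℕ} (hu : (tripleVerts u).card = 3)
    (h : tripleVerts w = tripleVerts u) :
    dedges w = dedges u ∨ dedges w = dedges (revTriple u) := by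
  obtain ⟨x, y, z⟩ := u
  obtain ⟨p, q, r⟩ := w
  simp only [tripleVerts] at h hu
  obtain ⟨hpq, hpr, hqr⟩ := ne_of_card_eq_three (h ▸ hu)
  obtain ⟨hxy, hxz, hyz⟩ := ne_of_card_eq_three hu
  have hp : p ∈ ({x, y, z} : Finset ℕ) := h ▸ by simp
  have hq : q ∈ ({x, y, z} : Finset ℕ) := h ▸ by simp
  have hr : r ∈ ({x, y, z} : Finset ℕ) := h ▸ by simp
  simp only [mem_insert, mem_singleton] at hp hq hr
  rcases hp with rfl | rfl | rfl <;> rcases hq with rfl | rfl | rfl <;>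
    rcases hr with rfl | rfl | rfl <;>
    first
    | contradiction
    | (left; ext; simp only [dedges, mem_insert, mem_singleton] <;> tauto)
    | (right; ext; simp only [dedges, revTriple, mem_insert, mem_singleton] <;> tauto)

lemma mem_dedges_revTriple {t : ℕ × ℕ × ℕ} {a b : ℕ} :
    (a, b) ∈ dedges (revTriple t) ↔ (b, a) ∈ dedges t := by
  simp only [dedges, revTriple, mem_insert, mem_singleton, Prod.mk.injEq]
  tauto

lemma tripleVerts_revTriple (t : ℕ × ℕ × ℕ) : tripleVerts (revTriple t) = tripleVerts t := by
  simp only [tripleVerts, revTriple]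
  grind

lemma dedges_prodMap (φ : ℕ → ℕ) (t : ℕ × ℕ × ℕ) :
    dedges (Prod.map φ (Prod.map φ φ) t) = (dedges t).image (Prod.map φ φ) := by
  simp [dedges, image_insert, Prod.map]

lemma tripleVerts_prodMap (φ : ℕ → ℕ) (t : ℕ × ℕ × ℕ) :
    tripleVerts (Prod.map φ (Prod.map φ φ) t) = (tripleVerts t).image φ := by
  simp [tripleVerts, image_insert]

def IsOrientation (K : Finset (Finset ℕ)) (ω : Finset ℕ → ℕ × ℕ × ℕ) : Prop :=
  (∀ T ∈ K, tripleVerts (ω T) = T) ∧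
  (∀ T₁ ∈ K, ∀ T₂ ∈ K, T₁ ≠ T₂ → ∀ a b : ℕ, a ≠ b →
      a ∈ T₁ ∩ T₂ → b ∈ T₁ ∩ T₂ →
      (a, b) ∈ dedges (ω T₁) → (b, a) ∈ dedges (ω T₂))

namespace IsOrientation

variable {K : Finset (Finset ℕ)} {ω : Finset ℕ → ℕ × ℕ × ℕ}

lemma reverse (hω : IsOrientation K ω) : IsOrientation K (revTriple ∘ ω) :=
  ⟨fun A hA => (tripleVerts_revTriple _).trans (hω.1 A hA),
    fun A hA B hB hAB a b hab ha hb h => mem_dedges_revTriple.2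
      (hω.2 A hA B hB hAB b a hab.symm hb ha (mem_dedges_revTriple.1 h))⟩

lemma exists_opposite (hω : IsOrientation K ω) {t : Finset ℕ} (ht : t ∈ K) (ht3 : t.card = 3)
    {u : ℕ × ℕ × ℕ} (hu : tripleVerts u = t) :
    ∃ ω', IsOrientation K ω' ∧ ∀ a b, (a, b) ∈ dedges (ω' t) ↔ (b, a) ∈ dedges u := by
  rcases dedges_eq_or_eq_revTriple (hu ▸ ht3) ((hω.1 t ht).trans hu.symm) with h | h
  · exact ⟨_, hω.reverse, fun a b => by rw [Function.comp_apply, mem_dedges_revTriple, h]⟩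
  · exact ⟨ω, hω, fun a b => by rw [h, mem_dedges_revTriple]⟩

lemma image (hω : IsOrientation K ω) {φ : ℕ → ℕ} (hφ : Function.Injective φ) :
    IsOrientation (K.image (Finset.image φ))
      (Prod.map φ (Prod.map φ φ) ∘ ω ∘ Function.invFun (Finset.image φ)) := by
  have hinv : ∀ A, Function.invFun (Finset.image φ) (A.image φ) = A :=
    Function.leftInverse_invFun (image_injective hφ)
  have hmem : ∀ {a b : ℕ} {t}, (φ a, φ b) ∈ dedges (Prod.map φ (Prod.map φ φ) t) ↔
      (a, b) ∈ dedges t := by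
    intro a b t
    rw [dedges_prodMap]
    exact (hφ.prodMap hφ).mem_finset_image (a := (a, b))
  refine ⟨?_, ?_⟩
  · simp only [forall_mem_image, Function.comp_apply, hinv, tripleVerts_prodMap]
    exact fun A hA => congrArg _ (hω.1 A hA)
  · simp only [forall_mem_image, Function.comp_apply, hinv]
    intro A hA B hB hAB a b hab ha hb h
    rw [← image_inter _ _ hφ] at ha hb
    obtain ⟨a, ha', rfl⟩ := mem_image.1 ha
    obtain ⟨b, hb', rfl⟩ := mem_image.1 hb
    exact hmem.2 (hω.2 A hA B hB (fun h => hAB (h ▸ rfl)) a b (fun h => hab (h ▸ rfl)) ha' hb'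
      (hmem.1 h))

variable {S T : Finset (Finset ℕ)} {ωS ωT : Finset ℕ → ℕ × ℕ × ℕ} {t : Finset ℕ}

lemma swap_mem_dedges_glue (hS : IsOrientation S ωS) (hT : IsOrientation T ωT) (htS : t ∈ S)
    (htT : t ∈ T) (hopp : ∀ a b, (a, b) ∈ dedges (ωS t) → (b, a) ∈ dedges (ωT t))
    {A B : Finset ℕ} (hA : A ∈ S.erase t) (hB : B ∈ T.erase t) (hAB : A ∩ B ⊆ t) {a b : ℕ}
    (hab : a ≠ b) (ha : a ∈ A ∩ B) (hb : b ∈ A ∩ B) (h : (a, b) ∈ dedges (ωS A)) :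
    (b, a) ∈ dedges (ωT B) := by
  obtain ⟨hAt, hA⟩ := mem_erase.1 hA
  obtain ⟨hBt, hB⟩ := mem_erase.1 hB
  rw [mem_inter] at ha hb
  have hba : (b, a) ∈ dedges (ωS t) := hS.2 A hA t htS hAt a b hab
    (mem_inter.2 ⟨ha.1, hAB (mem_inter.2 ha)⟩) (mem_inter.2 ⟨hb.1, hAB (mem_inter.2 hb)⟩) h
  exact hT.2 t htT B hB (Ne.symm hBt) a b hab (mem_inter.2 ⟨hAB (mem_inter.2 ha), ha.2⟩)
    (mem_inter.2 ⟨hAB (mem_inter.2 hb), hb.2⟩) (hopp b a hba)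

lemma glue (hS : IsOrientation S ωS) (hT : IsOrientation T ωT) (htS : t ∈ S) (htT : t ∈ T)
    (hdisj : Disjoint (S.erase t) (T.erase t)) (hinter : ∀ A ∈ S, ∀ B ∈ T, A ∩ B ⊆ t)
    (hopp : ∀ a b, (a, b) ∈ dedges (ωT t) ↔ (b, a) ∈ dedges (ωS t)) :
    IsOrientation (S.erase t ∪ T.erase t) fun C => if C ∈ S then ωS C else ωT C := by
  have hωS : ∀ C ∈ S.erase t, (if C ∈ S then ωS C else ωT C) = ωS C :=
    fun C hC => if_pos (mem_of_mem_erase hC)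
  have hωT : ∀ C ∈ T.erase t, (if C ∈ S then ωS C else ωT C) = ωT C := fun C hC =>
    if_neg fun hCS => disjoint_left.1 hdisj (mem_erase.2 ⟨ne_of_mem_erase hC, hCS⟩) hC
  refine ⟨fun C hC => ?_, fun C₁ hC₁ C₂ hC₂ hne a b hab ha hb h => ?_⟩ <;> beta_reduce at *
  · rcases mem_union.1 hC with hC | hC
    · rw [hωS C hC]
      exact hS.1 C (mem_of_mem_erase hC)
    · rw [hωT C hC]
      exact hT.1 C (mem_of_mem_erase hC)
  · rcases mem_union.1 hC₁ with h₁ | h₁ <;> rcases mem_union.1 hC₂ with h₂ | h₂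
    · rw [hωS _ h₁] at h
      rw [hωS _ h₂]
      exact hS.2 _ (mem_of_mem_erase h₁) _ (mem_of_mem_erase h₂) hne a b hab ha hb h
    · rw [hωS _ h₁] at h
      rw [hωT _ h₂]
      exact swap_mem_dedges_glue hS hT htS htT (fun a b => (hopp b a).2) h₁ h₂
        (hinter _ (mem_of_mem_erase h₁) _ (mem_of_mem_erase h₂)) hab ha hb h
    · rw [hωT _ h₁] at h
      rw [hωS _ h₂]
      exact swap_mem_dedges_glue hT hS htT htS (fun a b => (hopp a b).1) h₁ h₂
        (inter_comm C₁ C₂ ▸ hinter _ (mem_of_mem_erase h₂) _ (mem_of_mem_erase h₁)) hab ha hb h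
    · rw [hωT _ h₁] at h
      rw [hωT _ h₂]
      exact hT.2 _ (mem_of_mem_erase h₁) _ (mem_of_mem_erase h₂) hne a b hab ha hb h

end IsOrientation

namespace IsCombSurface

variable {V : Finset ℕ} {K : Finset (Finset ℕ)} {g : ℕ} {A e t : Finset ℕ} {v : ℕ}

lemma card_eq_three (hK : IsCombSurface V K g) (hA : A ∈ K) : A.card = 3 := (hK.2.1 A hA).1

lemma subset_of_mem (hK : IsCombSurface V K g) (hA : A ∈ K) : A ⊆ V := (hK.2.1 A hA).2

lemma card_filter_subset (hK : IsCombSurface V K g) (he : e.card = 2) (hA : A ∈ K)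
    (heA : e ⊆ A) : #(K.filter (e ⊆ ·)) = 2 :=
  hK.2.2.2.1 e he ⟨A, hA, heA⟩

lemma exists_mem_of_mem (hK : IsCombSurface V K g) (hv : v ∈ V) : ∃ A ∈ K, v ∈ A :=
  hK.2.2.1 v hv

lemma isConnectedIn (hK : IsCombSurface V K g) : IsConnectedIn K Adjacent := hK.2.2.2.2.2.1

lemma isConnectedIn_link (hK : IsCombSurface V K g) (v : ℕ) :
    IsConnectedIn (K.filter (v ∈ ·)) Adjacent := by
  intro A hA B hB
  rw [mem_filter] at hA hB
  refine Relation.ReflTransGen.mono (fun C D hCD => ?_) _ _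
    (hK.2.2.2.2.1 v (hK.subset_of_mem hA.1 hA.2) A hA.1 B hB.1 hA.2 hB.2)
  obtain ⟨hC, hD, hvC, hvD, hCD⟩ := hCD
  exact ⟨mem_filter.2 ⟨hC, hvC⟩, mem_filter.2 ⟨hD, hvD⟩, hCD⟩

lemma exists_isOrientation (hK : IsCombSurface V K g) : ∃ ω, IsOrientation K ω :=
  hK.2.2.2.2.2.2.1

lemma euler (hK : IsCombSurface V K g) :
    (V.card : ℤ) - (edgesOf K).card + K.card = 2 - 2 * (g : ℤ) :=
  hK.2.2.2.2.2.2.2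

lemma card_filter_subset_erase (hK : IsCombSurface V K g) (he : e.card = 2) (hA : A ∈ K)
    (heA : e ⊆ A) : #((K.erase A).filter (e ⊆ ·)) = 1 := by
  rw [filter_erase, card_erase_of_mem (mem_filter.2 ⟨hA, heA⟩), hK.card_filter_subset he hA heA]

lemma exists_subset_erase (hK : IsCombSurface V K g) (he : e.card = 2) (hA : A ∈ K)
    (heA : e ⊆ A) : ∃ B ∈ K.erase A, e ⊆ B := by
  obtain ⟨B, hB⟩ := card_pos.1 ((hK.card_filter_subset_erase he hA heA).symm ▸ one_pos)
  exact ⟨B, mem_of_mem_filter B hB, (mem_filter.1 hB).2⟩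

lemma not_adjacent_self (hK : IsCombSurface V K g) (hA : A ∈ K) : ¬ Adjacent A A := by
  rw [Adjacent, inter_self, hK.card_eq_three hA]
  norm_num

lemma filter_adjacent_eq_biUnion (hK : IsCombSurface V K g) (hA : A ∈ K) (hv : v ∈ A) :
    (K.filter (v ∈ ·)).filter (Adjacent A) =
      (A.erase v).biUnion fun w => (K.erase A).filter ({v, w} ⊆ ·) := by
  ext B
  simp only [mem_filter, mem_biUnion, mem_erase]
  constructor
  · rintro ⟨⟨hB, hvB⟩, hAB⟩
    obtain ⟨w, hw, hwv⟩ := exists_mem_ne (hAB ▸ one_lt_two) v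
    refine ⟨w, ⟨hwv, (mem_inter.1 hw).1⟩, ⟨?_, hB⟩,
      insert_subset hvB (singleton_subset_iff.2 (mem_inter.1 hw).2)⟩
    rintro rfl
    exact hK.not_adjacent_self hA hAB
  · rintro ⟨w, ⟨hwv, hwA⟩, ⟨hBA, hB⟩, hvwB⟩
    exact ⟨⟨hB, hvwB (mem_insert_self _ _)⟩, adjacent_of_subset (hK.card_eq_three hA)
      (hK.card_eq_three hB) (Ne.symm hBA) (card_pair hwv.symm)
      (insert_subset hv (singleton_subset_iff.2 hwA)) hvwB⟩

lemma card_filter_adjacent (hK : IsCombSurface V K g) (hA : A ∈ K) (hv : v ∈ A) :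
    #((K.filter (v ∈ ·)).filter (Adjacent A)) = 2 := by
  have hA3 := hK.card_eq_three hA
  have hdisj : (A.erase v : Set ℕ).PairwiseDisjoint fun w => (K.erase A).filter ({v, w} ⊆ ·) := by
    intro w hw w' hw' hww'
    refine disjoint_left.2 fun B hB hB' => ?_
    obtain ⟨hw, hwA⟩ := mem_erase.1 (mem_coe.1 hw)
    obtain ⟨hw', hw'A⟩ := mem_erase.1 (mem_coe.1 hw')
    obtain ⟨hB, hvwB⟩ := mem_filter.1 hB
    have hsub : ({v, w, w'} : Finset ℕ) ⊆ A ∩ B := by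
      simp only [insert_subset_iff, singleton_subset_iff, mem_inter]
      exact ⟨⟨hv, hvwB (mem_insert_self _ _)⟩, ⟨hwA, hvwB (by simp)⟩,
        ⟨hw'A, (mem_filter.1 hB').2 (by simp)⟩⟩
    have h3 : ({v, w, w'} : Finset ℕ).card = 3 := by
      rw [card_insert_of_notMem (by simp [hw.symm, hw'.symm]), card_pair hww']
    have := card_le_card hsub
    have := card_inter_lt_three hA3 (hK.card_eq_three (mem_of_mem_erase hB))
      (ne_of_mem_erase hB).symm
    omega
  rw [hK.filter_adjacent_eq_biUnion hA hv, card_biUnion hdisj, sum_congr rfl fun w hw =>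
    hK.card_filter_subset_erase (card_pair (ne_of_mem_erase hw).symm) hA
      (insert_subset hv (singleton_subset_iff.2 (mem_of_mem_erase hw))),
    sum_const, smul_eq_mul, mul_one, card_erase_of_mem hv, hA3]

lemma isConnectedIn_link_erase (hK : IsCombSurface V K g) (t : Finset ℕ) (v : ℕ) :
    IsConnectedIn ((K.erase t).filter (v ∈ ·)) Adjacent := by
  rw [filter_erase]
  refine (hK.isConnectedIn_link v).erase_of_two_regular
    (fun _ _ h => h.symm)
    (fun A hA => hK.not_adjacent_self (mem_of_mem_filter A hA))
    (fun A hA => hK.card_filter_adjacent (mem_filter.1 hA).1 (mem_filter.1 hA).2) t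

lemma isConnectedIn_erase (hK : IsCombSurface V K g) (ht : t ∈ K) :
    IsConnectedIn (K.erase t) Adjacent := by
  refine hK.isConnectedIn.erase_of_forall_adj t fun p hp q hq hpt htq => ?_
  -- The edges `p ∩ t` and `t ∩ q` of the triangle `t` share a vertex `u`; go around `u`.
  obtain ⟨u, hu⟩ : (p ∩ t ∩ (t ∩ q)).Nonempty :=
    inter_nonempty_of_card_lt_card_add_card inter_subset_right inter_subset_left
      (by rw [hK.card_eq_three ht, hpt, htq]; norm_num)
  simp only [mem_inter] at hu
  exact reflTransGen_relIn_mono (filter_subset _ _)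
    (hK.isConnectedIn_link_erase t u p (mem_filter.2 ⟨hp, hu.1.1⟩) q (mem_filter.2 ⟨hq, hu.2.2⟩))

lemma edgesOf_erase (hK : IsCombSurface V K g) (ht : t ∈ K) : edgesOf (K.erase t) = edgesOf K := by
  refine (biUnion_subset_biUnion_of_subset_left _ (erase_subset t K)).antisymm fun e he => ?_
  simp only [mem_biUnion, mem_powersetCard] at he ⊢
  obtain ⟨A, hA, heA, he⟩ := he
  by_cases hAt : A = t
  · subst hAt
    obtain ⟨B, hB, heB⟩ := hK.exists_subset_erase he hA heA
    exact ⟨B, hB, heB, he⟩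
  · exact ⟨A, mem_erase.2 ⟨hAt, hA⟩, heA, he⟩

lemma exists_pair_subset_erase (hK : IsCombSurface V K g) (ht : t ∈ K) {v w : ℕ} (hv : v ∈ t)
    (hw : w ∈ t) (hvw : v ≠ w) : ∃ A ∈ K.erase t, {v, w} ⊆ A :=
  hK.exists_subset_erase (card_pair hvw) ht (insert_subset hv (singleton_subset_iff.2 hw))

lemma exists_mem_erase (hK : IsCombSurface V K g) (ht : t ∈ K) (hv : v ∈ V) :
    ∃ A ∈ K.erase t, v ∈ A := by
  obtain ⟨A, hA, hvA⟩ := hK.exists_mem_of_mem hv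
  by_cases hAt : A = t
  · subst hAt
    obtain ⟨w, hw, hwv⟩ := exists_mem_ne (by rw [hK.card_eq_three hA]; norm_num) v
    obtain ⟨B, hB, hvwB⟩ := hK.exists_pair_subset_erase hA hvA hw hwv.symm
    exact ⟨B, hB, hvwB (mem_insert_self _ _)⟩
  · exact ⟨A, mem_erase.2 ⟨hAt, hA⟩, hvA⟩

end IsCombSurface

lemma powersetCard_image {φ : ℕ → ℕ} (hφ : Function.Injective φ) (n : ℕ) (A : Finset ℕ) :
    powersetCard n (A.image φ) = (powersetCard n A).image (Finset.image φ) := by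
  ext e
  simp only [mem_powersetCard, mem_image, subset_image_iff]
  constructor
  · rintro ⟨⟨e, he, rfl⟩, hcard⟩
    exact ⟨e, ⟨he, by rwa [card_image_of_injective _ hφ] at hcard⟩, rfl⟩
  · rintro ⟨e, ⟨he, hcard⟩, rfl⟩
    exact ⟨⟨e, he, rfl⟩, by rwa [card_image_of_injective _ hφ]⟩

lemma edgesOf_image {φ : ℕ → ℕ} (hφ : Function.Injective φ) (K : Finset (Finset ℕ)) :
    edgesOf (K.image (Finset.image φ)) = (edgesOf K).image (Finset.image φ) := by
  simp only [edgesOf, image_biUnion, biUnion_image, powersetCard_image hφ]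

lemma IsCombSurface.image {V : Finset ℕ} {K : Finset (Finset ℕ)} {g : ℕ} {φ : ℕ → ℕ}
    (hK : IsCombSurface V K g) (hφ : Function.Injective φ) :
    IsCombSurface (V.image φ) (K.image (Finset.image φ)) g := by
  have himage : ∀ u, (K.image (Finset.image φ)).filter (φ u ∈ ·) =
      (K.filter (u ∈ ·)).image (Finset.image φ) := fun u => by
    simp [filter_image, hφ.mem_finset_image]
  have hadj : ∀ A B : Finset ℕ, Adjacent A B → Adjacent (A.image φ) (B.image φ) :=
    fun A B h => by rwa [Adjacent, ← image_inter _ _ hφ, card_image_of_injective _ hφ]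
  obtain ⟨ω, hω⟩ := hK.exists_isOrientation
  refine ⟨hK.1.image _, ?_, ?_, ?_, ?_, ?_, ⟨_, hω.image hφ⟩, ?_⟩
  · simp only [forall_mem_image]
    exact fun A hA => ⟨(card_image_of_injective _ hφ).trans (hK.card_eq_three hA),
      image_subset_image (hK.subset_of_mem hA)⟩
  · simp only [forall_mem_image]
    intro u hu
    obtain ⟨A, hA, huA⟩ := hK.exists_mem_of_mem hu
    exact ⟨_, mem_image_of_mem _ hA, mem_image_of_mem φ huA⟩
  · rintro e he ⟨C, hC, heC⟩
    obtain ⟨A, hA, rfl⟩ := mem_image.1 hC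
    obtain ⟨e, heA, rfl⟩ := subset_image_iff.1 heC
    rw [card_image_of_injective _ hφ] at he
    rw [filter_image, card_image_of_injective _ (image_injective hφ),
      ← hK.card_filter_subset he hA heA]
    simp only [image_subset_image_iff hφ]
  · intro v hv A hA B hB hvA hvB
    obtain ⟨u, -, rfl⟩ := mem_image.1 hv
    refine reflTransGen_link_of_isConnectedIn ?_ hA hB hvA hvB
    rw [himage]
    exact (hK.isConnectedIn_link u).image fun A _ B _ => hadj A B
  · exact hK.isConnectedIn.image fun A _ B _ => hadj A B
  · rw [card_image_of_injective _ hφ, card_image_of_injective _ (image_injective hφ),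
      edgesOf_image hφ, card_image_of_injective _ (image_injective hφ)]
    exact hK.euler

lemma exists_injective_eqOn {s : Finset ℕ} {φ : ℕ → ℕ} (hφ : Set.InjOn φ s) :
    ∃ ψ : ℕ → ℕ, Function.Injective ψ ∧ Set.EqOn ψ φ s := by
  -- Off `s`, shift past every value that `φ` takes on `s`.
  set N := (s.image φ).sup id + 1
  have hlt : ∀ x ∈ s, φ x < N := fun x hx =>
    Nat.lt_succ_of_le (le_sup (f := id) (mem_image_of_mem φ hx))
  refine ⟨fun x => if x ∈ s then φ x else x + N, fun x y hxy => ?_, fun x hx => if_pos hx⟩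
  by_cases hx : x ∈ s <;> by_cases hy : y ∈ s <;> simp only [hx, hy, if_true, if_false] at hxy
  · exact hφ hx hy hxy
  · have := hlt x hx
    omega
  · have := hlt y hy
    omega
  · omega

lemma IsCombSurface.image_of_injOn {V : Finset ℕ} {K : Finset (Finset ℕ)} {g : ℕ} {φ : ℕ → ℕ}
    (hK : IsCombSurface V K g) (hφ : Set.InjOn φ V) :
    IsCombSurface (V.image φ) (K.image (Finset.image φ)) g := by
  obtain ⟨ψ, hψ, hψφ⟩ := exists_injective_eqOn hφ
  have himage : ∀ A ⊆ V, A.image ψ = A.image φ :=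
    fun A hA => image_congr (hψφ.mono (coe_subset.2 hA))
  rw [← himage V subset_rfl,
    ← image_congr fun A hA => himage A (hK.subset_of_mem (mem_coe.1 hA))]
  exact hK.image hψ

section Glue

variable {VS VT : Finset ℕ} {S T : Finset (Finset ℕ)} {gS gT : ℕ} {t : Finset ℕ}

lemma inter_subset_of_inter_eq (hS : IsCombSurface VS S gS) (hT : IsCombSurface VT T gT)
    (hVST : VS ∩ VT = t) {A B : Finset ℕ} (hA : A ∈ S) (hB : B ∈ T) : A ∩ B ⊆ t :=
  hVST ▸ inter_subset_inter (hS.subset_of_mem hA) (hT.subset_of_mem hB)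

lemma disjoint_erase_of_inter_eq (hS : IsCombSurface VS S gS) (hT : IsCombSurface VT T gT)
    (htS : t ∈ S) (hVST : VS ∩ VT = t) : Disjoint (S.erase t) (T.erase t) := by
  refine disjoint_left.2 fun A hAS hAT => ne_of_mem_erase hAS ?_
  have hAt : A ⊆ t := inter_self A ▸
    inter_subset_of_inter_eq hS hT hVST (mem_of_mem_erase hAS) (mem_of_mem_erase hAT)
  exact eq_of_subset_of_card_le hAt
    (by rw [hS.card_eq_three htS, hS.card_eq_three (mem_of_mem_erase hAS)])

lemma exists_adjacent_glue (hS : IsCombSurface VS S gS) (hT : IsCombSurface VT T gT)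
    (htS : t ∈ S) (htT : t ∈ T) (hVST : VS ∩ VT = t) {v : ℕ} (hv : v ∈ t) :
    ∃ A ∈ S.erase t, ∃ B ∈ T.erase t, v ∈ A ∧ v ∈ B ∧ Adjacent A B := by
  obtain ⟨w, hw, hwv⟩ := exists_mem_ne (by rw [hS.card_eq_three htS]; norm_num) v
  obtain ⟨A, hA, hvwA⟩ := hS.exists_pair_subset_erase htS hv hw hwv.symm
  obtain ⟨B, hB, hvwB⟩ := hT.exists_pair_subset_erase htT hv hw hwv.symm
  have hAB : A ≠ B := fun h =>
    disjoint_left.1 (disjoint_erase_of_inter_eq hS hT htS hVST) hA (h ▸ hB)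
  exact ⟨A, hA, B, hB, hvwA (mem_insert_self _ _), hvwB (mem_insert_self _ _),
    adjacent_of_subset (hS.card_eq_three (mem_of_mem_erase hA))
      (hT.card_eq_three (mem_of_mem_erase hB)) hAB (card_pair hwv.symm) hvwA hvwB⟩

lemma card_filter_subset_glue (hS : IsCombSurface VS S gS) (hT : IsCombSurface VT T gT)
    (htS : t ∈ S) (htT : t ∈ T) (hVST : VS ∩ VT = t) {e : Finset ℕ} (he : e.card = 2)
    (hex : ∃ C ∈ S.erase t ∪ T.erase t, e ⊆ C) :
    #((S.erase t ∪ T.erase t).filter (e ⊆ ·)) = 2 := by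
  rw [filter_union, card_union_of_disjoint
    (disjoint_filter_filter (disjoint_erase_of_inter_eq hS hT htS hVST))]
  by_cases het : e ⊆ t
  · rw [hS.card_filter_subset_erase he htS het, hT.card_filter_subset_erase he htT het]
  have herase : ∀ K : Finset (Finset ℕ), (K.erase t).filter (e ⊆ ·) = K.filter (e ⊆ ·) :=
    fun K => by rw [filter_erase, erase_eq_of_notMem fun h => het (mem_filter.1 h).2]
  have hnot : ∀ A ∈ S, ∀ B ∈ T, e ⊆ A → e ⊆ B → False := fun A hA B hB heA heB =>
    het ((subset_inter heA heB).trans (inter_subset_of_inter_eq hS hT hVST hA hB))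
  rw [herase, herase]
  obtain ⟨C, hC, heC⟩ := hex
  rcases mem_union.1 hC with hC | hC
  · rw [hS.card_filter_subset he (mem_of_mem_erase hC) heC, card_eq_zero.2
      (filter_eq_empty_iff.2 fun B hB heB => hnot C (mem_of_mem_erase hC) B hB heC heB)]
  · rw [hT.card_filter_subset he (mem_of_mem_erase hC) heC, card_eq_zero.2
      (filter_eq_empty_iff.2 fun A hA heA => hnot A hA C (mem_of_mem_erase hC) heA heC)]

lemma filter_mem_glue_of_notMem (hT : IsCombSurface VT T gT) (hVST : VS ∩ VT = t) {v : ℕ}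
    (hvS : v ∈ VS) (hvt : v ∉ t) : (S.erase t ∪ T.erase t).filter (v ∈ ·) = S.filter (v ∈ ·) := by
  ext C
  simp only [mem_filter, mem_union, mem_erase]
  constructor
  · rintro ⟨⟨-, hC⟩ | ⟨-, hC⟩, hvC⟩
    · exact ⟨hC, hvC⟩
    · exact absurd (hVST ▸ mem_inter.2 ⟨hvS, hT.subset_of_mem hC hvC⟩) hvt
  · rintro ⟨hC, hvC⟩
    exact ⟨Or.inl ⟨fun h => hvt (h ▸ hvC), hC⟩, hvC⟩

lemma isConnectedIn_link_glue (hS : IsCombSurface VS S gS) (hT : IsCombSurface VT T gT)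
    (htS : t ∈ S) (htT : t ∈ T) (hVST : VS ∩ VT = t) {v : ℕ} (hv : v ∈ VS ∪ VT) :
    IsConnectedIn ((S.erase t ∪ T.erase t).filter (v ∈ ·)) Adjacent := by
  by_cases hvt : v ∈ t
  · obtain ⟨A, hA, B, hB, hvA, hvB, hAB⟩ := exists_adjacent_glue hS hT htS htT hVST hvt
    rw [filter_union]
    exact (hS.isConnectedIn_link_erase t v).union (hT.isConnectedIn_link_erase t v)
      (mem_filter.2 ⟨hA, hvA⟩) (mem_filter.2 ⟨hB, hvB⟩) hAB hAB.symm
  rcases mem_union.1 hv with hv | hv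
  · rw [filter_mem_glue_of_notMem hT hVST hv hvt]
    exact hS.isConnectedIn_link v
  · rw [union_comm, filter_mem_glue_of_notMem hS (inter_comm VS VT ▸ hVST) hv hvt]
    exact hT.isConnectedIn_link v

lemma isConnectedIn_glue (hS : IsCombSurface VS S gS) (hT : IsCombSurface VT T gT)
    (htS : t ∈ S) (htT : t ∈ T) (hVST : VS ∩ VT = t) :
    IsConnectedIn (S.erase t ∪ T.erase t) Adjacent := by
  obtain ⟨v, hv⟩ : t.Nonempty := card_pos.1 (by rw [hS.card_eq_three htS]; norm_num)
  obtain ⟨A, hA, B, hB, -, -, hAB⟩ := exists_adjacent_glue hS hT htS htT hVST hv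
  exact (hS.isConnectedIn_erase htS).union (hT.isConnectedIn_erase htT) hA hB hAB hAB.symm

lemma edgesOf_glue (hS : IsCombSurface VS S gS) (hT : IsCombSurface VT T gT) (htS : t ∈ S)
    (htT : t ∈ T) : edgesOf (S.erase t ∪ T.erase t) = edgesOf S ∪ edgesOf T := by
  rw [← hS.edgesOf_erase htS, ← hT.edgesOf_erase htT]
  exact union_biUnion

lemma edgesOf_inter_glue (hS : IsCombSurface VS S gS) (hT : IsCombSurface VT T gT)
    (htS : t ∈ S) (htT : t ∈ T) (hVST : VS ∩ VT = t) :
    edgesOf S ∩ edgesOf T = t.powersetCard 2 := by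
  ext e
  simp only [mem_inter, edgesOf, mem_biUnion, mem_powersetCard]
  constructor
  · rintro ⟨⟨A, hA, heA, he⟩, ⟨B, hB, heB, -⟩⟩
    exact ⟨(subset_inter heA heB).trans (inter_subset_of_inter_eq hS hT hVST hA hB), he⟩
  · rintro ⟨het, he⟩
    exact ⟨⟨t, htS, het, he⟩, ⟨t, htT, het, he⟩⟩

lemma euler_glue (hS : IsCombSurface VS S gS) (hT : IsCombSurface VT T gT) (htS : t ∈ S)
    (htT : t ∈ T) (hVST : VS ∩ VT = t) :
    ((VS ∪ VT).card : ℤ) - (edgesOf (S.erase t ∪ T.erase t)).card +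
      (S.erase t ∪ T.erase t).card = 2 - 2 * ((gS + gT : ℕ) : ℤ) := by
  have ht3 := hS.card_eq_three htS
  have hV : (VS ∪ VT).card + 3 = VS.card + VT.card := by
    rw [← card_union_add_card_inter, hVST, ht3]
  have hE : (edgesOf (S.erase t ∪ T.erase t)).card + 3 =
      (edgesOf S).card + (edgesOf T).card := by
    rw [edgesOf_glue hS hT htS htT, ← card_union_add_card_inter,
      edgesOf_inter_glue hS hT htS htT hVST, card_powersetCard, ht3]
    rfl
  have hF : (S.erase t ∪ T.erase t).card + 2 = S.card + T.card := by
    rw [card_union_of_disjoint (disjoint_erase_of_inter_eq hS hT htS hVST),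
      card_erase_of_mem htS, card_erase_of_mem htT]
    have := card_pos.2 ⟨t, htS⟩
    have := card_pos.2 ⟨t, htT⟩
    omega
  have := hS.euler
  have := hT.euler
  push_cast
  omega

theorem IsCombSurface.glue (hS : IsCombSurface VS S gS) (hT : IsCombSurface VT T gT)
    (htS : t ∈ S) (htT : t ∈ T) (hVST : VS ∩ VT = t) :
    IsCombSurface (VS ∪ VT) (S.erase t ∪ T.erase t) (gS + gT) := by
  have ht3 := hS.card_eq_three htS
  have hdisj := disjoint_erase_of_inter_eq hS hT htS hVST
  obtain ⟨ωS, hωS⟩ := hS.exists_isOrientation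
  obtain ⟨ωT₀, hωT₀⟩ := hT.exists_isOrientation
  obtain ⟨ωT, hωT, hopp⟩ := hωT₀.exists_opposite htT (hT.card_eq_three htT) (hωS.1 t htS)
  refine ⟨?_, ?_, ?_, fun e he hex => card_filter_subset_glue hS hT htS htT hVST he hex,
    fun v hv A hA B hB hvA hvB => reflTransGen_link_of_isConnectedIn
      (isConnectedIn_link_glue hS hT htS htT hVST hv) hA hB hvA hvB,
    isConnectedIn_glue hS hT htS htT hVST,
    ⟨_, hωS.glue hωT htS htT hdisj (fun A hA B hB => inter_subset_of_inter_eq hS hT hVST hA hB)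
      hopp⟩, ?_⟩
  · obtain ⟨v, hv⟩ : t.Nonempty := card_pos.1 (by rw [ht3]; norm_num)
    obtain ⟨A, hA, -⟩ := hS.exists_mem_erase htS (hS.subset_of_mem htS hv)
    exact ⟨A, mem_union_left _ hA⟩
  · intro C hC
    rcases mem_union.1 hC with hC | hC
    · exact ⟨hS.card_eq_three (mem_of_mem_erase hC),
        (hS.subset_of_mem (mem_of_mem_erase hC)).trans subset_union_left⟩
    · exact ⟨hT.card_eq_three (mem_of_mem_erase hC),
        (hT.subset_of_mem (mem_of_mem_erase hC)).trans subset_union_right⟩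
  · intro v hv
    rcases mem_union.1 hv with hv | hv
    · obtain ⟨A, hA, hvA⟩ := hS.exists_mem_erase htS hv
      exact ⟨A, mem_union_left _ hA, hvA⟩
    · obtain ⟨A, hA, hvA⟩ := hT.exists_mem_erase htT hv
      exact ⟨A, mem_union_right _ hA, hvA⟩
  · exact euler_glue hS hT htS htT hVST

end Glue

lemma AdmitsEmbedding.mono {K L : Finset (Finset ℕ)} (hKL : K ⊆ L) (hL : AdmitsEmbedding L) :
    AdmitsEmbedding K := by
  obtain ⟨f, hgen, hdisj⟩ := hL
  have hV : vertsOf K ⊆ vertsOf L := biUnion_subset_biUnion_of_subset_left _ hKL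
  have hface : ∀ σ, IsFaceOf K σ → IsFaceOf L σ :=
    fun σ ⟨hne, A, hA, hσA⟩ => ⟨hne, A, hKL hA, hσA⟩
  exact ⟨f, fun a ha b hb c hc d hd => hgen a (hV ha) b (hV hb) c (hV hc) d (hV hd),
    fun σ τ hσ hτ => hdisj σ τ (hface σ hσ) (hface τ hτ)⟩

lemma image_erase_of_injOn {α β : Type*} [DecidableEq α] [DecidableEq β] {f : α → β}
    {s : Finset α} {a : α} (hf : Set.InjOn f s) (ha : a ∈ s) :
    (s.erase a).image f = (s.image f).erase (f a) := by
  ext b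
  simp only [mem_image, mem_erase]
  constructor
  · rintro ⟨x, ⟨hxa, hx⟩, rfl⟩
    exact ⟨fun h => hxa (hf hx ha h), x, hx, rfl⟩
  · rintro ⟨hb, x, hx, rfl⟩
    exact ⟨x, ⟨fun h => hb (h ▸ rfl), hx⟩, rfl⟩

lemma injOn_image_of_injOn {V : Finset ℕ} {K : Finset (Finset ℕ)} {φ : ℕ → ℕ}
    (hφ : Set.InjOn φ V) (hK : ∀ A ∈ K, A ⊆ V) : Set.InjOn (Finset.image φ) K :=
  fun A hA B hB h => (image_subset_image_iff_of_injOn hφ (hK A hA) (hK B hB)).1 h.le |>.antisymm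
    ((image_subset_image_iff_of_injOn hφ (hK B hB) (hK A hA)).1 h.ge)

lemma image_eq_union_sdiff {φ : ℕ → ℕ} {s t V : Finset ℕ} (hs : s ⊆ V) (hst : s.image φ = t)
    (hφ : ∀ x ∉ s, φ x = x) : V.image φ = t ∪ (V \ s) := by
  conv_lhs => rw [← union_sdiff_of_subset hs]
  rw [image_union, hst, image_congr fun x hx => hφ x (mem_sdiff.1 (mem_coe.1 hx)).2, image_id']

/-- Connected sum of two combinatorial surfaces along triangles `T₁`, `T₂`, with the
vertices of `T₂` identified with those of `T₁` via the bijection `φ`: the result is a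
combinatorial closed orientable surface of genus `gS + gT` with `|VS| + |VT| - 3`
vertices, and if `S \ {T₁}` admits no embedding into ℝ³, neither does the connected
sum. -/
theorem connected_sum (VS VT : Finset ℕ) (S T : Finset (Finset ℕ)) (gS gT : ℕ)
    (hS : IsCombSurface VS S gS) (hT : IsCombSurface VT T gT)
    (hVdisj : Disjoint VS VT)
    (T₁ : Finset ℕ) (hT₁ : T₁ ∈ S) (T₂ : Finset ℕ) (hT₂ : T₂ ∈ T)
    (φ : ℕ → ℕ) (hφ : Set.BijOn φ (T₂ : Set ℕ) (T₁ : Set ℕ))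
    (hφid : ∀ x ∉ T₂, φ x = x)
    (X : Finset (Finset ℕ))
    (hX : X = (S.erase T₁) ∪ ((T.erase T₂).image (Finset.image φ))) :
    IsCombSurface (VS ∪ (VT \ T₂)) X (gS + gT) ∧
    (VS ∪ (VT \ T₂)).card = VS.card + VT.card - 3 ∧
    (¬ AdmitsEmbedding (S.erase T₁) → ¬ AdmitsEmbedding X) := by
  subst hX
  have hT₁V := hS.subset_of_mem hT₁
  have hT₂V := hT.subset_of_mem hT₂
  have hT₂3 := hT.card_eq_three hT₂
  have hdisj : Disjoint VS (VT \ T₂) := hVdisj.mono_right sdiff_subset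
  have hT₂T₁ : T₂.image φ = T₁ := coe_injective (by rw [coe_image]; exact hφ.image_eq)
  have hVT : VT.image φ = T₁ ∪ (VT \ T₂) := image_eq_union_sdiff hT₂V hT₂T₁ hφid
  -- `φ` maps `VT` onto `T₁ ∪ (VT \ T₂)`, which has as many elements as `VT`.
  have hinj : Set.InjOn φ VT := card_image_iff.1 <| by
    rw [hVT, card_union_of_disjoint (hdisj.mono_left hT₁V), card_sdiff_of_subset hT₂V,
      hS.card_eq_three hT₁, hT₂3]
    have := card_le_card hT₂V
    omega
  have hglue := hS.glue (hT.image_of_injOn hinj) hT₁ (hT₂T₁ ▸ mem_image_of_mem _ hT₂)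
    (by rw [hVT, inter_union_distrib_left, inter_eq_right.2 hT₁V,
      disjoint_iff_inter_eq_empty.1 hdisj, union_empty])
  have hX : (T.image (image φ)).erase T₁ = (T.erase T₂).image (image φ) :=
    hT₂T₁ ▸ (image_erase_of_injOn (injOn_image_of_injOn hinj fun B => hT.subset_of_mem) hT₂).symm
  rw [hVT, ← union_assoc, union_eq_left.2 hT₁V, hX] at hglue
  refine ⟨hglue, ?_, fun h hemb => h (hemb.mono subset_union_left)⟩
  rw [card_union_of_disjoint hdisj, card_sdiff_of_subset hT₂V, hT₂3]
  have := card_le_card hT₂V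
  omega
end
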